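/- arXiv:1605.01105 — 5 statements merged into one kernel-verified Lean document; each statement's English description precedes it below -/
import Mathlib

section
/- Let C_0 be an [n,t] linear code over F_q and let C be an [n,k] subcode with k ≤ t. Then C is a maximally recoverable subcode of C_0 if and only if every vector c ∈ C^⊥ of Hamming weight at most k is also a codeword of C_0^⊥. -/
open Matrix

section Defs
variable {F : Type*} [Field F]

/-- Rank of the submatrix of `G` consisting of the columns indexed by `S`. -/
noncomputable def colRank {m α : Type*} [Fintype α] (G : Matrix m α F) (S : Finset α) : ℕ :=
  (G.submatrix id (fun j : S => (j : α))).rank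

/-- The row space of a matrix. -/
def rowSpan {m α : Type*} (G : Matrix m α F) : Submodule F (α → F) :=
  Submodule.span F (Set.range fun i => G i)

/-- Rank of the restriction (puncturing) of a code `C` to the coordinates in `S`. -/
noncomputable def restrRank {α : Type*} (C : Submodule F (α → F)) (S : Finset α) : ℕ :=
  Module.finrank F (C.map (LinearMap.funLeft F F (fun j : S => (j : α))))

/-- Shortening of a code on coordinates `α ⊕ β` to the coordinates `α`. -/
noncomputable def shortenSum {α β : Type*} (D : Submodule F ((α ⊕ β) → F)) :
    Submodule F (α → F) :=
  Submodule.map (LinearMap.funLeft F F Sum.inl)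
    (D ⊓ (⨅ j : β, LinearMap.ker
      (LinearMap.proj (R := F) (Sum.inr j) : ((α ⊕ β) → F) →ₗ[F] F)))

/-- A valid (zero-error, worst case) scheme for the point-to-point function-update problem. -/
def IsValidScheme [DecidableEq F] {n m ℓ : ℕ} (A : Matrix (Fin m) (Fin n) F)
    (H : Matrix (Fin ℓ) (Fin n) F) (ε : ℕ)
    (D : (Fin ℓ → F) → (Fin m → F) → (Fin m → F)) : Prop :=
  ∀ X E : Fin n → F, hammingNorm E ≤ ε →
    D (H.mulVec (X + E)) (A.mulVec X) = A.mulVec (X + E)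

end Defs

/-! Because the rows of `G` lie in the row space of `G0`, `ker G0 ⊆ ker G`. If `c ∈ ker G` has
weight at most `k` but `G0 c ≠ 0`, replace `c` by a vector with the same image under `G0` whose
support is a set of independent columns of `G0` inside the support of `c`; it still lies in `ker G`.
As `G0` has rank `t ≥ k`, this set extends to `k` independent columns of `G0`, so maximal
recoverability makes the same columns of `G` independent and the vector vanishes, a contradiction.
Conversely, a kernel vector of `G` supported on a `k`-set `S` has weight at most `k`, so it is also
killed by `G0`, hence is zero when the columns of `G0` on `S` are independent. -/

open Finset

section ColumnIndependence

variable {F : Type*} [Field F] {m m₀ ι : Type*} [Fintype ι]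

theorem Matrix.mulVec_eq_linearCombination_col (M : Matrix m ι F) (l : ι →₀ F) :
    M *ᵥ ⇑l = Finsupp.linearCombination F M.col l := by
  rw [mulVec_eq_sum, Finsupp.linearCombination_apply, Finsupp.sum_fintype _ _ (by simp)]
  simp only [op_smul_eq_smul]
  rfl

theorem colRank_eq_card_iff_linearIndepOn (M : Matrix m ι F) (S : Finset ι) :
    colRank M S = #S ↔ LinearIndepOn F M.col (S : Set ι) := by
  rw [LinearIndepOn, linearIndependent_iff_card_eq_finrank_span, eq_comm, colRank,
    rank_eq_finrank_span_cols]
  simp only [Finset.coe_sort_coe, Fintype.card_coe]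
  rfl

theorem Matrix.mulVec_eq_zero_of_forall_mem_rowSpan [Fintype m₀] {M₀ : Matrix m₀ ι F}
    {M : Matrix m ι F} (hrows : ∀ i, M i ∈ rowSpan M₀) {c : ι → F} (hc : M₀ *ᵥ c = 0) :
    M *ᵥ c = 0 := by
  funext i
  obtain ⟨w, hw⟩ : M i ∈ LinearMap.range M₀.vecMulLinear := by
    rw [range_vecMulLinear]; exact hrows i
  rw [mulVec, ← hw, vecMulLinear_apply, ← dotProduct_mulVec, hc,
    dotProduct_zero, Pi.zero_apply]

theorem Matrix.mulVec_mem_span_col (M : Matrix m ι F) (c : ι → F) :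
    M *ᵥ c ∈ Submodule.span F (M.col '' Function.support c) := by
  rw [Finsupp.mem_span_image_iff_linearCombination]
  refine ⟨Finsupp.equivFunOnFinite.symm c, ?_, ?_⟩
  · rw [Finsupp.mem_supported, ← Finsupp.fun_support_eq]; rfl
  · rw [← mulVec_eq_linearCombination_col]; rfl

theorem Matrix.exists_linearIndepOn_col_mulVec_eq (M : Matrix m ι F) (c : ι → F) :
    ∃ l : ι →₀ F, (l.support : Set ι) ⊆ Function.support c ∧
      LinearIndepOn F M.col (l.support : Set ι) ∧ M *ᵥ ⇑l = M *ᵥ c := by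
  obtain ⟨T, hTc, -, hspan, hT⟩ :=
    exists_linearIndepOn_extension (linearIndepOn_empty F M.col) (Set.empty_subset _)
  obtain ⟨l, hlT, hl⟩ := (Finsupp.mem_span_image_iff_linearCombination F).mp
    (Submodule.span_le.mpr hspan (M.mulVec_mem_span_col c))
  rw [Finsupp.mem_supported] at hlT
  exact ⟨l, hlT.trans hTc, hT.mono hlT, by rw [mulVec_eq_linearCombination_col, hl]⟩

theorem Matrix.exists_linearIndepOn_col_superset_card_eq (M : Matrix m ι F) {T : Finset ι}
    (hT : LinearIndepOn F M.col (T : Set ι)) {k : ℕ} (hTk : #T ≤ k) (hk : k ≤ M.rank) :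
    ∃ S : Finset ι, T ⊆ S ∧ #S = k ∧ LinearIndepOn F M.col (S : Set ι) := by
  classical
  obtain ⟨B, -, hTB, hspan, hB⟩ := exists_linearIndepOn_extension hT (Set.subset_univ _)
  have := FiniteDimensional.span_of_finite F ((Set.toFinite B).image M.col)
  have hrank : M.rank ≤ #B.toFinset := by
    rw [rank_eq_finrank_span_cols, ← Set.image_univ]
    calc _ ≤ (M.col '' B).finrank F := Submodule.finrank_mono (Submodule.span_le.mpr hspan)
      _ ≤ #(B.toFinset.image M.col) := by
          simpa only [Finset.coe_image, Set.coe_toFinset] using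
            finrank_span_finset_le_card (R := F) (B.toFinset.image M.col)
      _ ≤ #B.toFinset := card_image_le
  obtain ⟨S, hTS, hSB, hSk⟩ := exists_subsuperset_card_eq
    (Set.subset_toFinset.mpr hTB) hTk (hk.trans hrank)
  exact ⟨S, hTS, hSk, hB.mono (by simpa using hSB)⟩

theorem linearIndepOn_col_of_sparse_kernel [DecidableEq F] {M₀ : Matrix m₀ ι F}
    {M : Matrix m ι F} {S : Finset ι}
    (hsparse : ∀ c : ι → F, M *ᵥ c = 0 → hammingNorm c ≤ #S → M₀ *ᵥ c = 0)
    (hS : LinearIndepOn F M₀.col (S : Set ι)) : LinearIndepOn F M.col (S : Set ι) := by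
  rw [linearIndepOn_iff] at hS ⊢
  intro l hlS hMl
  rw [← mulVec_eq_linearCombination_col] at hMl
  refine hS l hlS ?_
  rw [← mulVec_eq_linearCombination_col]
  refine hsparse _ hMl (card_le_card fun i hi => ?_)
  rw [Finsupp.mem_supported] at hlS
  exact hlS (by simpa using hi)

theorem mulVec_eq_zero_of_hammingNorm_le [DecidableEq F] [Fintype m₀] {M₀ : Matrix m₀ ι F}
    {M : Matrix m ι F} (hrows : ∀ i, M i ∈ rowSpan M₀) {k : ℕ} (hk : k ≤ M₀.rank)
    (hmr : ∀ S : Finset ι, #S = k → LinearIndepOn F M₀.col (S : Set ι) →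
      LinearIndepOn F M.col (S : Set ι))
    {c : ι → F} (hMc : M *ᵥ c = 0) (hc : hammingNorm c ≤ k) : M₀ *ᵥ c = 0 := by
  obtain ⟨l, hlc, hl, hM₀l⟩ := M₀.exists_linearIndepOn_col_mulVec_eq c
  have hMl : M *ᵥ ⇑l = 0 := by
    have := mulVec_eq_zero_of_forall_mem_rowSpan hrows (c := ⇑l - c)
      (by rw [mulVec_sub, hM₀l, sub_self])
    rwa [mulVec_sub, hMc, sub_zero] at this
  have hlk : #l.support ≤ k := (card_le_card fun i hi => by simpa using hlc hi).trans hc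
  obtain ⟨S, hlS, hSk, hS⟩ := M₀.exists_linearIndepOn_col_superset_card_eq hl hlk hk
  have hl0 : l = 0 := linearIndepOn_iff.mp (hmr S hSk hS) l
    ((Finsupp.mem_supported F _).mpr (by exact_mod_cast hlS))
    (by rwa [← mulVec_eq_linearCombination_col])
  rw [← hM₀l, hl0, Finsupp.coe_zero, mulVec_zero]

end ColumnIndependence

theorem mrsc_iff_sparse_dual_general {F : Type*} [Field F] [DecidableEq F]
    {n t k : ℕ} (hkt : k ≤ t)
    (G0 : Matrix (Fin t) (Fin n) F) (G : Matrix (Fin k) (Fin n) F)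
    (hG0 : G0.rank = t)
    (hsub : ∀ i, G i ∈ rowSpan G0) :
    (∀ S : Finset (Fin n), S.card = k → colRank G0 S = k → colRank G S = k) ↔
      (∀ c : Fin n → F, G.mulVec c = 0 → hammingNorm c ≤ k → G0.mulVec c = 0) := by
  have hcolRank {r : ℕ} (M : Matrix (Fin r) (Fin n) F) {S : Finset (Fin n)} (hS : #S = k) :
      colRank M S = k ↔ LinearIndepOn F M.col (S : Set (Fin n)) := by
    rw [← hS, colRank_eq_card_iff_linearIndepOn]
  constructor
  · intro hmrsc c hGc hc
    refine mulVec_eq_zero_of_hammingNorm_le hsub (hG0.symm ▸ hkt) (fun S hS hS₀ => ?_) hGc hc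
    exact (hcolRank G hS).mp (hmrsc S hS ((hcolRank G0 hS).mpr hS₀))
  · intro hsparse S hS hS₀
    rw [hcolRank G0 hS] at hS₀
    rw [hcolRank G hS]
    exact linearIndepOn_col_of_sparse_kernel (hS ▸ hsparse) hS₀

/-- `C` is an MRSC of `C₀` iff every dual codeword of `C` of Hamming
weight at most `k` is a dual codeword of `C₀`. -/
theorem mrsc_iff_sparse_dual {F : Type*} [Field F] [Fintype F] [DecidableEq F]
    {n t k : ℕ} (hkt : k ≤ t)
    (G0 : Matrix (Fin t) (Fin n) F) (G : Matrix (Fin k) (Fin n) F)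
    (hG0 : G0.rank = t) (hG : G.rank = k)
    (hsub : ∀ i, G i ∈ rowSpan G0) :
    (∀ S : Finset (Fin n), S.card = k → colRank G0 S = k → colRank G S = k) ↔
      (∀ c : Fin n → F, G.mulVec c = 0 → hammingNorm c ≤ k → G0.mulVec c = 0) :=
  mrsc_iff_sparse_dual_general hkt G0 G hG0 hsub
end

section
/- Let C_0 be an [n,t] linear code over F_q with generator matrix G_0, and let C be a subcode that is a maximally recoverable subcode of C_0 with dim C = k < t. Let S ⊆ [n] with |S| = k - x for some 1 ≤ x ≤ k-1 satisfy rank(G_0|_S) = k - x. Then there exists a set S' ⊆ [n] disjoint from S with |S'| = x such that rank(G_0|_{S∪S'}) = k, and consequently rank(G|_S) = k - x for a generator matrix G of C. -/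
/-!
Since `rank G0 = t > k`, the columns of `G0` indexed by `S` can be greedily completed, one
column outside their span at a time, by a set `S'` of `x` further columns to a set of rank `k`.
Maximal recoverability then gives `rank(G|_{S ∪ S'}) = k`, and since the `x` columns of `S'`
contribute at most `x` to the rank, `rank(G|_S) ≥ k - x = |S|`.
-/

open Matrix

section ColumnRank

variable {F m α : Type*} [Field F] [Fintype α]

theorem colRank_eq_finrank_span (G : Matrix m α F) (S : Finset α) :
    colRank G S = Module.finrank F (Submodule.span F (G.col '' S)) := by
  rw [colRank, rank_eq_finrank_span_cols, Set.image_eq_range]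
  rfl

theorem colRank_le_card (G : Matrix m α F) (S : Finset α) : colRank G S ≤ S.card :=
  (rank_le_card_width _).trans (Fintype.card_coe S).le

variable [DecidableEq α]

theorem colRank_union_le [Finite m] (G : Matrix m α F) (A B : Finset α) :
    colRank G (A ∪ B) ≤ colRank G A + colRank G B := by
  rw [colRank_eq_finrank_span, colRank_eq_finrank_span, colRank_eq_finrank_span,
    Finset.coe_union, Set.image_union, Submodule.span_union]
  exact Submodule.finrank_add_le_finrank_add_finrank _ _

theorem exists_colRank_insert_eq_succ [Finite m] (G : Matrix m α F) (U : Finset α)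
    (h : colRank G U < G.rank) :
    ∃ j ∉ U, colRank G (insert j U) = colRank G U + 1 := by
  rw [colRank_eq_finrank_span, rank_eq_finrank_span_cols] at h
  obtain ⟨j, hj⟩ : ∃ j, G.col j ∉ Submodule.span F (G.col '' U) := by
    by_contra! hcols
    have hle : Submodule.span F (Set.range G.col) ≤ Submodule.span F (G.col '' U) :=
      Submodule.span_le.mpr (Set.range_subset_iff.mpr hcols)
    exact (Submodule.finrank_mono hle).not_gt h
  refine ⟨j, fun hjU => hj (Submodule.subset_span ⟨j, hjU, rfl⟩), ?_⟩
  rw [colRank_eq_finrank_span, colRank_eq_finrank_span, Finset.coe_insert, Set.image_insert_eq,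
    Submodule.span_insert, sup_comm]
  exact Submodule.finrank_sup_span_singleton hj

theorem exists_disjoint_colRank_union_eq [Finite m] (G : Matrix m α F) (S : Finset α) {r : ℕ}
    (h : colRank G S + r ≤ G.rank) :
    ∃ S' : Finset α, Disjoint S S' ∧ S'.card = r ∧ colRank G (S ∪ S') = colRank G S + r := by
  induction r with
  | zero => exact ⟨∅, Finset.disjoint_empty_right S, rfl, by simp⟩
  | succ r ih =>
    obtain ⟨S', hdisj, hcard, hrank⟩ := ih (by omega)
    obtain ⟨j, hj, hrank_insert⟩ := exists_colRank_insert_eq_succ G (S ∪ S') (by omega)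
    rw [Finset.mem_union, not_or] at hj
    refine ⟨insert j S', Finset.disjoint_insert_right.mpr ⟨hj.1, hdisj⟩, ?_, ?_⟩
    · rw [Finset.card_insert_of_notMem hj.2, hcard]
    · rw [Finset.union_insert, hrank_insert, hrank, add_assoc]

end ColumnRank

theorem mrsc_partial_rank_general {F : Type*} [Field F] {n t k x : ℕ}
    (hkt : k < t)
    (G0 : Matrix (Fin t) (Fin n) F) (G : Matrix (Fin k) (Fin n) F)
    (hG0 : G0.rank = t)
    (hmrsc : ∀ S : Finset (Fin n), S.card = k → colRank G0 S = k → colRank G S = k)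
    (hx2 : x ≤ k - 1)
    (S : Finset (Fin n)) (hS : S.card = k - x) (hrk : colRank G0 S = k - x) :
    (∃ S' : Finset (Fin n), Disjoint S S' ∧ S'.card = x ∧ colRank G0 (S ∪ S') = k) ∧
      colRank G S = k - x := by
  obtain ⟨S', hdisj, hcard, hrank⟩ :=
    exists_disjoint_colRank_union_eq G0 S (r := x) (by omega)
  have hrank_union : colRank G0 (S ∪ S') = k := by omega
  refine ⟨⟨S', hdisj, hcard, hrank_union⟩, ?_⟩
  have hG_union := hmrsc (S ∪ S') (by rw [Finset.card_union_of_disjoint hdisj]; omega) hrank_union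
  have hsubadd := colRank_union_le G S S'
  have hS_le := colRank_le_card G S
  have hS'_le := colRank_le_card G S'
  omega

/-- if `C` is a `k`-dimensional MRSC of `C₀` with `k < t`, and `S` has
size `k - x` (`1 ≤ x ≤ k-1`) with `rank(G0|_S) = k - x`, then `S` can be completed by a
disjoint `S'` of size `x` to a set of full column rank `k` of `G0`, and consequently
`rank(G|_S) = k - x`. -/
theorem mrsc_partial_rank {F : Type*} [Field F] [Fintype F] {n t k x : ℕ}
    (hkt : k < t)
    (G0 : Matrix (Fin t) (Fin n) F) (G : Matrix (Fin k) (Fin n) F)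
    (hG0 : G0.rank = t) (hG : G.rank = k)
    (hsub : ∀ i, G i ∈ rowSpan G0)
    (hmrsc : ∀ S : Finset (Fin n), S.card = k → colRank G0 S = k → colRank G S = k)
    (hx1 : 1 ≤ x) (hx2 : x ≤ k - 1)
    (S : Finset (Fin n)) (hS : S.card = k - x) (hrk : colRank G0 S = k - x) :
    (∃ S' : Finset (Fin n), Disjoint S S' ∧ S'.card = x ∧ colRank G0 (S ∪ S') = k) ∧
      colRank G S = k - x :=
  mrsc_partial_rank_general hkt G0 G hG0 hmrsc hx2 S hS hrk
end

section
/- Let a = (a_1,...,a_K) ∈ F_q^K and let A be the m × mK block-diagonal matrix with m copies of a on the diagonal. Let n = mK and 2ε < m. Let Q ∈ F_q^{m×(m-2ε)} be such that Q^T generates an [m, m-2ε] MDS code over F_q. Then, letting A^{(e)} = [A | Q] and C_H = (C_{A^{(e)}})^{[n]} (shortening of the code generated by the rows of A^{(e)} to the first n coordinates), the code C_H is an [n, 2ε] maximally recoverable subcode of the code C_A generated by the rows of A. -/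
open Matrix

/-!
Shortening `[A | Q]` to the first `n` coordinates gives `{c A : c Q = 0}`, visibly a subcode of
`C_A`. Since `(c A)_(i,k) = c_i a_k`, a set `S` of `2ε` columns of `A` of full rank meets `2ε`
distinct blocks `i`, each through a column with `a_k ≠ 0`. A message `c` with `c Q = 0` whose
codeword vanishes on `S` is then supported on the remaining `m - 2ε` rows of `Q`, which are
independent by the MDS property, so `c = 0`. Hence restriction to `S` is injective on `ker Q`,
of dimension at least `m - (m - 2ε) = 2ε`, while the restricted code has dimension at most `|S|`.
-/

open Module Submodule

section
variable {F : Type*} [Field F]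

theorem Matrix.linearIndependent_row_of_rank_eq_card {ι β : Type*} [Fintype ι] [Fintype β]
    {M : Matrix ι β F} (h : M.rank = Fintype.card ι) : LinearIndependent F M.row := by
  rw [linearIndependent_iff_card_eq_finrank_span, Set.finrank, ← M.rank_eq_finrank_span_row, h]

theorem Matrix.rank_le_card_of_row_eq_zero {ι β : Type*} [Fintype ι] [Fintype β]
    (M : Matrix ι β F) (J : Finset ι) (h : ∀ i ∉ J, M i = 0) : M.rank ≤ J.card := by
  classical
  have hrows : Set.range M.row ⊆ span F (J.image M.row : Set (β → F)) := by
    rintro _ ⟨i, rfl⟩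
    by_cases hi : i ∈ J
    · exact subset_span (Finset.mem_coe.mpr (Finset.mem_image_of_mem _ hi))
    · rw [show M.row i = 0 from h i hi]
      exact zero_mem _
  calc M.rank = finrank F (span F (Set.range M.row)) := M.rank_eq_finrank_span_row
    _ ≤ finrank F (span F (J.image M.row : Set (β → F))) := finrank_mono (span_le.mpr hrows)
    _ ≤ (J.image M.row).card := finrank_span_finset_le_card _
    _ ≤ J.card := Finset.card_image_le

theorem Matrix.finrank_ker_vecMulLinear_add_rank {ι β : Type*} [Fintype ι] [Fintype β]
    (Q : Matrix ι β F) : finrank F (LinearMap.ker Q.vecMulLinear) + Q.rank = Fintype.card ι := by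
  rw [Q.rank_eq_finrank_span_row, ← range_vecMulLinear, add_comm,
    LinearMap.finrank_range_add_finrank_ker, finrank_fintype_fun_eq_card]

theorem linearIndependent_rows_of_colRank_transpose {ι β : Type*} [Fintype ι] [Fintype β]
    (Q : Matrix ι β F) {T : Finset ι} (h : colRank Qᵀ T = T.card) :
    LinearIndependent F fun t : T => Q t := by
  rw [colRank, ← transpose_submatrix, rank_transpose] at h
  exact Matrix.linearIndependent_row_of_rank_eq_card (M := Q.submatrix (fun t : T => (t : ι)) id)
    (by simpa using h)

theorem eq_zero_of_vecMul_eq_zero_of_linearIndependent {ι β : Type*} [Fintype ι]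
    {Q : Matrix ι β F} {T : Finset ι} (hT : LinearIndependent F fun t : T => Q t)
    {c : ι → F} (hc : c ᵥ* Q = 0) (hsupp : ∀ i ∉ T, c i = 0) : c = 0 := by
  have hsum : ∑ t : T, c t • Q t = 0 := by
    rw [← hc, vecMul_eq_sum, Finset.sum_coe_sort T fun i => c i • Q i]
    exact Finset.sum_subset (Finset.subset_univ T) fun i _ hi => by simp [hsupp i hi]
  funext i
  by_cases hi : i ∈ T
  · exact Fintype.linearIndependent_iff.mp hT _ hsum ⟨i, hi⟩
  · exact hsupp i hi

theorem restrRank_le_card {α : Type*} (C : Submodule F (α → F)) (S : Finset α) :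
    restrRank C S ≤ S.card := by
  simpa [restrRank] using finrank_le (C.map (LinearMap.funLeft F F fun j : S => (j : α)))

theorem restrRank_map_eq_finrank {V α : Type*} [AddCommGroup V] [Module F V]
    (f : V →ₗ[F] α → F) (P : Submodule F V) (S : Finset α)
    (h : ∀ v ∈ P, (∀ s ∈ S, f v s = 0) → v = 0) : restrRank (P.map f) S = finrank F P := by
  set g := (LinearMap.funLeft F F fun j : S => (j : α)) ∘ₗ f
  have hinj : Function.Injective (g.domRestrict P) := by
    rw [← LinearMap.ker_eq_bot, eq_bot_iff]
    rintro ⟨v, hv⟩ hgv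
    have hzero : ∀ s ∈ S, f v s = 0 := fun s hs => congrFun hgv ⟨s, hs⟩
    simpa using h v hv hzero
  rw [restrRank, ← map_comp, ← LinearMap.range_domRestrict, LinearMap.finrank_range_of_inj hinj]

theorem rowSpan_eq_range_vecMulLinear {ι α : Type*} [Fintype ι] (G : Matrix ι α F) :
    rowSpan G = LinearMap.range G.vecMulLinear :=
  (range_vecMulLinear G).symm

theorem shortenSum_rowSpan_fromCols {ι α β : Type*} [Fintype ι] (A : Matrix ι α F)
    (Q : Matrix ι β F) :
    shortenSum (rowSpan (fromCols A Q)) = (LinearMap.ker Q.vecMulLinear).map A.vecMulLinear := by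
  rw [shortenSum, rowSpan_eq_range_vecMulLinear]
  ext x
  simp only [mem_map, mem_inf, mem_iInf, LinearMap.mem_range, LinearMap.mem_ker,
    LinearMap.proj_apply, vecMulLinear_apply]
  constructor
  · rintro ⟨_, ⟨⟨c, rfl⟩, hQ⟩, rfl⟩
    exact ⟨c, funext fun j => by simpa using hQ j, rfl⟩
  · rintro ⟨c, hc, rfl⟩
    exact ⟨_, ⟨⟨c, rfl⟩, fun j => by simp [hc]⟩, rfl⟩

def stripeMatrix {ι κ : Type*} [DecidableEq ι] (a : κ → F) : Matrix ι (ι × κ) F :=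
  fun i j => if i = j.1 then a j.2 else 0

theorem vecMul_stripeMatrix {ι κ : Type*} [Fintype ι] [DecidableEq ι] (a : κ → F) (c : ι → F) :
    c ᵥ* stripeMatrix a = fun j => c j.1 * a j.2 := by
  funext j
  simp [vecMul, dotProduct, stripeMatrix]

theorem colRank_stripeMatrix_le {ι κ : Type*} [Fintype ι] [Fintype κ] [DecidableEq ι] (a : κ → F)
    {S : Finset (ι × κ)} {J : Finset ι} (hJ : ∀ s ∈ S, a s.2 ≠ 0 → s.1 ∈ J) :
    colRank (stripeMatrix a) S ≤ J.card := by
  refine Matrix.rank_le_card_of_row_eq_zero _ _ fun i hi => funext fun s => ?_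
  simp only [submatrix_apply, id, stripeMatrix, Pi.zero_apply]
  split_ifs with hs
  · by_contra ha
    exact hi (hs ▸ hJ s s.2 ha)
  · rfl

end

theorem striped_low_field_mrsc_general {F : Type*} [Field F] {m K ε : ℕ}
    (hε : 2 * ε < m) (a : Fin K → F)
    (A : Matrix (Fin m) (Fin m × Fin K) F)
    (hA : ∀ i j, A i j = if i = j.1 then a j.2 else 0)
    (Q : Matrix (Fin m) (Fin (m - 2 * ε)) F)
    (hMDS : ∀ T : Finset (Fin m), T.card = m - 2 * ε → colRank Qᵀ T = m - 2 * ε) :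
    (∀ x ∈ shortenSum (rowSpan (Matrix.fromCols A Q)), x ∈ rowSpan A) ∧
      (∀ S : Finset (Fin m × Fin K), S.card = 2 * ε → colRank A S = 2 * ε →
        restrRank (shortenSum (rowSpan (Matrix.fromCols A Q))) S = 2 * ε) := by
  classical
  obtain rfl : A = stripeMatrix a := funext₂ hA
  rw [shortenSum_rowSpan_fromCols]
  refine ⟨fun x hx => ?_, fun S hS hrank => ?_⟩
  · rw [rowSpan_eq_range_vecMulLinear]
    exact LinearMap.map_le_range hx
  set J := (S.filter fun s => a s.2 ≠ 0).image Prod.fst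
  have hJ : J.card = 2 * ε := le_antisymm
    ((Finset.card_image_le.trans (Finset.card_filter_le _ _)).trans hS.le)
    (hrank ▸ colRank_stripeMatrix_le a fun s hs ha =>
      Finset.mem_image_of_mem _ (Finset.mem_filter.mpr ⟨hs, ha⟩))
  have hJc : Jᶜ.card = m - 2 * ε := by simp [Finset.card_compl, hJ]
  have hQ : LinearIndependent F fun t : (Jᶜ : Finset (Fin m)) => Q t :=
    linearIndependent_rows_of_colRank_transpose Q (by rw [hMDS _ hJc, hJc])
  have hinj : ∀ c ∈ LinearMap.ker Q.vecMulLinear,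
      (∀ s ∈ S, (stripeMatrix a).vecMulLinear c s = 0) → c = 0 := by
    intro c hc hcS
    refine eq_zero_of_vecMul_eq_zero_of_linearIndependent hQ hc fun i hi => ?_
    obtain ⟨s, hs, rfl⟩ := Finset.mem_image.mp (Finset.notMem_compl.mp hi)
    rw [Finset.mem_filter] at hs
    have hs0 := hcS s hs.1
    rw [vecMulLinear_apply, vecMul_stripeMatrix] at hs0
    exact (mul_eq_zero.mp hs0).resolve_right hs.2
  have hle :=
    restrRank_le_card ((LinearMap.ker Q.vecMulLinear).map (stripeMatrix a).vecMulLinear) S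
  have hker := Q.finrank_ker_vecMulLinear_add_rank
  have hQrank := Q.rank_le_card_width
  rw [restrRank_map_eq_finrank _ _ _ hinj] at hle ⊢
  simp only [Fintype.card_fin] at hker hQrank
  omega

/-- for the block-diagonal striping matrix `A` (m copies of the row
vector `a`) and an MDS extension `Q`, the shortening of the code generated by
`[A | Q]` to the first `n = mK` coordinates is a maximally recoverable subcode of
`C_A` (of dimension `2ε`, per Definition 1). -/
theorem striped_low_field_mrsc {F : Type*} [Field F] [Fintype F] {m K ε : ℕ}
    (hε : 2 * ε < m) (a : Fin K → F)
    (A : Matrix (Fin m) (Fin m × Fin K) F)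
    (hA : ∀ i j, A i j = if i = j.1 then a j.2 else 0)
    (Q : Matrix (Fin m) (Fin (m - 2 * ε)) F)
    (hMDS : ∀ T : Finset (Fin m), T.card = m - 2 * ε → colRank Qᵀ T = m - 2 * ε) :
    (∀ x ∈ shortenSum (rowSpan (Matrix.fromCols A Q)), x ∈ rowSpan A) ∧
      (∀ S : Finset (Fin m × Fin K), S.card = 2 * ε → colRank A S = 2 * ε →
        restrRank (shortenSum (rowSpan (Matrix.fromCols A Q))) S = 2 * ε) :=
  striped_low_field_mrsc_general hε a A hA Q hMDS
end

section
/- In the point-to-point function update problem with full-rank m×n matrix A, sparsity ε, and m > 2ε: if H is a 2ε×n matrix such that the code C_H is a maximally recoverable subcode of C_A (in particular H = SA for some 2ε×m matrix S), then for any two ε-sparse vectors E, Ê ∈ F_q^n, HE = HÊ implies AE = AÊ. Consequently there exists a valid decoding scheme achieving communication cost ℓ = 2ε. -/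
/-!
Let `H = P * A`. If `H *ᵥ v = 0` for a vector `v` of Hamming weight at most `2ε`, the columns of
`A` on the support of `v` span a space of dimension at most `2ε`; as `A` has rank `m > 2ε`, a
basis of that space extends to exactly `2ε` independent columns of `A`, indexed by `S`. By maximal
recoverability the columns of `H` on `S` are independent as well. Writing `A *ᵥ v = A *ᵥ w` with
`w` supported on `S` gives `H *ᵥ w = P *ᵥ (A *ᵥ v) = H *ᵥ v = 0`, hence `w = 0` and `A *ᵥ v = 0`.
Applied to `v = E - Ê`, this shows that any `ε`-sparse solution `Ê` of the syndrome equation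
`H *ᵥ Ê = H *ᵥ (X + E) - P *ᵥ (A *ᵥ X)` determines `A *ᵥ E`.
-/

open Matrix

section

open Module Submodule Set

theorem hammingNorm_sub_le {ι β : Type*} [Fintype ι] [AddCommGroup β] [DecidableEq β]
    (x y : ι → β) :
    hammingNorm (x - y) ≤ hammingNorm x + hammingNorm y := by
  calc
    hammingNorm (x - y) = hammingDist y x := by rw [hammingDist_eq_hammingNorm, neg_add_eq_sub]
    _ ≤ hammingDist y 0 + hammingDist 0 x := hammingDist_triangle y 0 x
    _ = hammingNorm x + hammingNorm y := by
      rw [hammingDist_zero_right, hammingDist_zero_left, add_comm]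

variable {F : Type*} [Field F]

theorem linearCombination_col {m ι : Type*} [Fintype ι] (G : Matrix m ι F) (l : ι →₀ F) :
    Finsupp.linearCombination F G.col l = G *ᵥ ⇑l := by
  ext i
  rw [Finsupp.linearCombination_apply, Finsupp.sum_fintype _ _ (by simp)]
  simp [mulVec, dotProduct, Finset.sum_apply, mul_comm]

theorem mulVec_mem_span_image_support {m ι : Type*} [Fintype ι] (G : Matrix m ι F) (v : ι → F) :
    G *ᵥ v ∈ span F (G.col '' Function.support v) :=
  (Finsupp.mem_span_image_iff_linearCombination F).2
    ⟨Finsupp.equivFunOnFinite.symm v, by simp [Finsupp.mem_supported], by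
      rw [linearCombination_col]; rfl⟩

theorem colRank_eq_card_iff {m ι : Type*} [Fintype ι] (G : Matrix m ι F) (S : Finset ι) :
    colRank G S = S.card ↔ LinearIndepOn F G.col (S : Set ι) := by
  unfold LinearIndepOn
  rw [colRank, rank_eq_finrank_span_cols, linearIndependent_iff_card_eq_finrank_span, eq_comm]
  simp only [SetLike.coe_sort_coe, Fintype.card_coe]
  rfl

theorem exists_linearIndepOn_card_eq_span_le {ι V : Type*} [Finite ι] [AddCommGroup V]
    [Module F V] (v : ι → V) (T : Set ι) {k : ℕ} (hT : T.ncard ≤ k)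
    (hk : k ≤ finrank F (span F (range v))) :
    ∃ S : Finset ι, S.card = k ∧ LinearIndepOn F v S ∧ span F (v '' T) ≤ span F (v '' S) := by
  obtain ⟨I, hIT, -, hTI, hI⟩ :=
    exists_linearIndepOn_extension (linearIndepOn_empty F v) (empty_subset T)
  obtain ⟨B, -, hIB, hB, hBi⟩ := exists_linearIndepOn_extension hI (subset_univ I)
  have hBcard : finrank F (span F (range v)) = B.ncard := by
    have : Fintype B := Fintype.ofFinite B
    rw [← image_univ, le_antisymm (span_le.2 hB) (span_mono (image_mono (subset_univ B))),
      image_eq_range, finrank_span_eq_card hBi, ncard_eq_toFinset_card', toFinset_card]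
  obtain ⟨S, hIS, hSB, hS⟩ := exists_subsuperset_card_eq hIB
    ((ncard_le_ncard hIT).trans hT) (hk.trans hBcard.le)
  refine ⟨S.toFinite.toFinset, by rw [← hS, ncard_eq_toFinset_card S], ?_, ?_⟩ <;>
    rw [Finite.coe_toFinset]
  · exact hBi.mono hSB
  · exact (span_le.2 hTI).trans (span_mono (image_mono hIS))

theorem mulVec_eq_zero_of_linearIndepOn_mul {l m ι : Type*} [Fintype m] [Fintype ι]
    (A : Matrix m ι F) (P : Matrix l m F) {S : Set ι} (hS : LinearIndepOn F (P * A).col S)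
    {v : ι → F} (hAv : A *ᵥ v ∈ span F (A.col '' S)) (hPAv : (P * A) *ᵥ v = 0) : A *ᵥ v = 0 := by
  obtain ⟨w, hwS, hw⟩ := (Finsupp.mem_span_image_iff_linearCombination F).1 hAv
  rw [linearCombination_col] at hw
  have hw0 : w = 0 := (linearIndepOn_iff.1 hS) w hwS <| by
    rw [linearCombination_col, ← mulVec_mulVec, hw, mulVec_mulVec, hPAv]
  rw [← hw, hw0, Finsupp.coe_zero, mulVec_zero]

theorem mulVec_eq_zero_of_hammingNorm_le_s14 [DecidableEq F] {l m ι : Type*} [Fintype m] [Fintype ι]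
    (A : Matrix m ι F) (P : Matrix l m F) {k : ℕ} (hk : k ≤ finrank F (span F (range A.col)))
    (hmrsc : ∀ S : Finset ι, S.card = k → colRank A S = k → colRank (P * A) S = k)
    {v : ι → F} (hv : hammingNorm v ≤ k) (hPAv : (P * A) *ᵥ v = 0) : A *ᵥ v = 0 := by
  have hsupp : (Function.support v).ncard ≤ k := by
    rw [hammingNorm, ← ncard_coe_finset] at hv
    simpa [Function.support] using hv
  obtain ⟨S, hScard, hSA, hspan⟩ := exists_linearIndepOn_card_eq_span_le A.col _ hsupp hk
  have hSPA : LinearIndepOn F (P * A).col S := by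
    rw [← colRank_eq_card_iff, hScard]
    exact hmrsc S hScard (hScard ▸ (colRank_eq_card_iff A S).2 hSA)
  exact mulVec_eq_zero_of_linearIndepOn_mul A P hSPA
    (hspan (mulVec_mem_span_image_support A v)) hPAv

-- Given `s = H *ᵥ (X + E)` and `y = A *ᵥ X`, the vector `s - P *ᵥ y` is the syndrome `H *ᵥ E`.
open Classical in
noncomputable def syndromeDecoder [DecidableEq F] {n m ℓ : ℕ} (A : Matrix (Fin m) (Fin n) F)
    (P : Matrix (Fin ℓ) (Fin m) F) (ε : ℕ) (s : Fin ℓ → F) (y : Fin m → F) : Fin m → F :=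
  y + A *ᵥ (if h : ∃ e, hammingNorm e ≤ ε ∧ (P * A) *ᵥ e = s - P *ᵥ y then h.choose else 0)

theorem isValidScheme_syndromeDecoder [DecidableEq F] {n m ℓ ε : ℕ} (A : Matrix (Fin m) (Fin n) F)
    (P : Matrix (Fin ℓ) (Fin m) F)
    (hA : ∀ E E' : Fin n → F, hammingNorm E ≤ ε → hammingNorm E' ≤ ε →
      (P * A) *ᵥ E = (P * A) *ᵥ E' → A *ᵥ E = A *ᵥ E') :
    IsValidScheme A (P * A) ε (syndromeDecoder A P ε) := by
  intro X E hE
  have hsyn : (P * A) *ᵥ (X + E) - P *ᵥ (A *ᵥ X) = (P * A) *ᵥ E := by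
    rw [mulVec_mulVec, mulVec_add, add_sub_cancel_left]
  have hex : ∃ e, hammingNorm e ≤ ε ∧ (P * A) *ᵥ e = (P * A) *ᵥ (X + E) - P *ᵥ (A *ᵥ X) :=
    ⟨E, hE, hsyn.symm⟩
  obtain ⟨hnorm, heq⟩ := hex.choose_spec
  rw [syndromeDecoder, dif_pos hex, hA _ _ hnorm hE (heq.trans hsyn), mulVec_add]

end

theorem mrsc_gives_valid_scheme_general {F : Type*} [Field F] [DecidableEq F]
    {n m ε : ℕ} (hε : 2 * ε < m)
    (A : Matrix (Fin m) (Fin n) F) (hA : A.rank = m)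
    (H : Matrix (Fin (2 * ε)) (Fin n) F)
    (hSA : ∃ Smat : Matrix (Fin (2 * ε)) (Fin m) F, H = Smat * A)
    (hmrsc : ∀ S : Finset (Fin n), S.card = 2 * ε → colRank A S = 2 * ε →
      colRank H S = 2 * ε) :
    (∀ E E' : Fin n → F, hammingNorm E ≤ ε → hammingNorm E' ≤ ε →
      H.mulVec E = H.mulVec E' → A.mulVec E = A.mulVec E') ∧
      ∃ D : (Fin (2 * ε) → F) → (Fin m → F) → (Fin m → F), IsValidScheme A H ε D := by
  obtain ⟨P, rfl⟩ := hSA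
  have hk : 2 * ε ≤ Module.finrank F (Submodule.span F (Set.range A.col)) := by
    rw [← rank_eq_finrank_span_cols, hA]; exact hε.le
  have hident : ∀ E E' : Fin n → F, hammingNorm E ≤ ε → hammingNorm E' ≤ ε →
      (P * A) *ᵥ E = (P * A) *ᵥ E' → A *ᵥ E = A *ᵥ E' := fun E E' hE hE' hEE' => by
    rw [← sub_eq_zero, ← mulVec_sub]
    refine mulVec_eq_zero_of_hammingNorm_le_s14 A P hk hmrsc ?_ (by rw [mulVec_sub, hEE', sub_self])
    exact (hammingNorm_sub_le E E').trans (by omega)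
  exact ⟨hident, _, isValidScheme_syndromeDecoder A P hident⟩

/-- achievability: if `C_H` is a `2ε`-dimensional MRSC of `C_A`
(in particular `H = S·A`), then `H` identifies `AE` from `HE` for `ε`-sparse errors,
and hence yields a valid scheme of communication cost `2ε`. -/
theorem mrsc_gives_valid_scheme {F : Type*} [Field F] [Fintype F] [DecidableEq F]
    {n m ε : ℕ} (hm : m ≤ n) (hε : 2 * ε < m)
    (A : Matrix (Fin m) (Fin n) F) (hA : A.rank = m)
    (H : Matrix (Fin (2 * ε)) (Fin n) F)
    (hSA : ∃ Smat : Matrix (Fin (2 * ε)) (Fin m) F, H = Smat * A)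
    (hmrsc : ∀ S : Finset (Fin n), S.card = 2 * ε → colRank A S = 2 * ε →
      colRank H S = 2 * ε) :
    (∀ E E' : Fin n → F, hammingNorm E ≤ ε → hammingNorm E' ≤ ε →
      H.mulVec E = H.mulVec E' → A.mulVec E = A.mulVec E') ∧
      ∃ D : (Fin (2 * ε) → F) → (Fin m → F) → (Fin m → F), IsValidScheme A H ε D :=
  mrsc_gives_valid_scheme_general hε A hA H hSA hmrsc
end

section
/- Let C_0 be an [n,t] code over F_q with generator matrix G_0 = [Ĝ; B] where Ĝ (s×n) generates an [n,s] subcode Ĉ satisfying: for every S ⊆ [n] with |S| = k (s ≤ k ≤ t), rank(G_0|_S) = k implies rank(Ĝ|_S) = s. Let Q = q^{t-s}, let α_1,...,α_{t-s} be a basis of F_Q over F_q, and define β_1,...,β_n by [β_1 ... β_n] = [α_1 ... α_{t-s}]B. Let C be the [n,k] code over F_Q generated by the matrix stacking Ĝ on top of the (k-s)×n Moore-type matrix with rows (β_1^{q^{i-1}}, ..., β_n^{q^{i-1}}), i = 1,...,k-s. Then C is a maximally recoverable subcode of C_0^{(Q)} (the code over F_Q generated by G_0), and Ĉ^{(Q)}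 ⊆ C. -/
open Matrix

/-!
Fix `S` with `|S| = k` on which `G₀` has full rank, and let `V ⊆ F^S` be the `F`-kernel of
`Ĝ|_S`, of dimension at least `k - s`. Pairing a row relation
`λ Ĝ|_S + ∑ₗ gₗ (β_j ^ q ^ l)_j = 0` with `w ∈ V` shows that the `q`-linearized polynomial
`∑ₗ gₗ X ^ q ^ l` vanishes at `∑_j w_j β_j`, because `x ↦ x ^ q` is `F`-linear. As `G₀|_S` has
trivial kernel, `w ↦ ∑_j w_j β_j = ∑_i (B|_S w)_i αᵢ` is injective on `V`, so the polynomial has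
`q ^ (k - s)` roots but degree below `q ^ (k - s)`. Hence `g = 0`, and then `λ = 0` because
`Ĝ|_S` has rank `s`. This is the invertibility of the Moore matrix of the `γᵢ`, in transposed form.
-/

open Polynomial Module
open LinearMap (ker mem_ker)

namespace Matrix

theorem fromRows_submatrix_id {α l m₁ m₂ n : Type*} (A₁ : Matrix m₁ n α) (A₂ : Matrix m₂ n α)
    (c : l → n) :
    (fromRows A₁ A₂).submatrix id c = fromRows (A₁.submatrix id c) (A₂.submatrix id c) := by
  ext (_ | _) _ <;> rfl

variable {K : Type*} [Field K] {m n : Type*} [Fintype n]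

theorem linearIndependent_row_of_rank_eq_card_s17 [Fintype m] {A : Matrix m n K}
    (h : A.rank = Fintype.card m) : LinearIndependent K A.row := by
  rw [linearIndependent_iff_card_eq_finrank_span, Set.finrank, ← rank_eq_finrank_span_row, h]

theorem linearIndependent_col_of_rank_eq_card {A : Matrix m n K}
    (h : A.rank = Fintype.card n) : LinearIndependent K A.col := by
  rw [linearIndependent_iff_card_eq_finrank_span, Set.finrank, ← rank_eq_finrank_span_cols, h]

theorem linearIndependent_col_of_rank_map_eq_card [Finite m] (L : Type*) [Field L] [Algebra K L]
    {A : Matrix m n K} (h : (A.map (algebraMap K L)).rank = Fintype.card n) :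
    LinearIndependent K A.col :=
  linearIndependent_algebraMap_comp_iff.mp (linearIndependent_col_of_rank_eq_card h)

theorem card_sub_card_le_finrank_ker_mulVecLin [Fintype m] (A : Matrix m n K) :
    Fintype.card n - Fintype.card m ≤ finrank K (ker A.mulVecLin) := by
  have h := A.mulVecLin.finrank_range_add_finrank_ker
  rw [finrank_fintype_fun_eq_card] at h
  have := A.rank_le_card_height
  rw [rank] at this
  omega

theorem disjoint_ker_mulVecLin_of_linearIndependent_col {κ : Type*} [Fintype m] [Fintype κ]
    (A : Matrix m n K) (B : Matrix κ n K) (h : LinearIndependent K (fromRows A B).col) :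
    Disjoint (ker A.mulVecLin) (ker B.mulVecLin) := by
  rw [Submodule.disjoint_def]
  intro w hA hB
  refine mulVec_injective_iff.mpr h ?_
  rw [fromRows_mulVec, mulVec_zero, show A *ᵥ w = 0 from hA, show B *ᵥ w = 0 from hB]
  ext (_ | _) <;> rfl

end Matrix

section LinearCombination

variable {R M : Type*} {κ ι : Type*} [Fintype κ] [Fintype ι]

theorem Fintype.linearCombination_mulVec [CommSemiring R] [AddCommMonoid M] [Module R M]
    (v : κ → M) (B : Matrix κ ι R) (w : ι → R) :
    Fintype.linearCombination R v (B *ᵥ w) =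
      Fintype.linearCombination R (fun j => ∑ i, B i j • v i) w := by
  simp only [Fintype.linearCombination_apply, Matrix.mulVec, dotProduct, Finset.sum_smul,
    Finset.smul_sum, smul_smul]
  rw [Finset.sum_comm]
  simp_rw [mul_comm]

theorem Fintype.ker_linearCombination_sum_smul [CommRing R] [AddCommGroup M] [Module R M]
    {v : κ → M} (hv : LinearIndependent R v) (B : Matrix κ ι R) :
    ker (Fintype.linearCombination R fun j => ∑ i, B i j • v i) = ker B.mulVecLin := by
  ext w
  rw [mem_ker, mem_ker, Matrix.mulVecLin_apply, ← Fintype.linearCombination_mulVec]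
  exact linearIndependent_iff_injective_fintypeLinearCombination.mp hv |>.eq_iff' (map_zero _)

end LinearCombination

theorem FiniteField.frobeniusAlgHom_pow_apply (F : Type*) {R : Type*} [Field F] [Fintype F]
    [CommRing R] [Algebra F R] (l : ℕ) (x : R) :
    (frobeniusAlgHom F R ^ l) x = x ^ Fintype.card F ^ l := by
  rw [AlgHom.coe_pow, coe_frobeniusAlgHom, pow_iterate]

section LinearizedPoly

variable {R : Type*} [Semiring R] {d : ℕ}

noncomputable def linearizedPoly (q : ℕ) (g : Fin d → R) : R[X] :=
  ∑ l, C (g l) * X ^ q ^ (l : ℕ)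

theorem eval_linearizedPoly (q : ℕ) (g : Fin d → R) (x : R) :
    (linearizedPoly q g).eval x = ∑ l, g l * x ^ q ^ (l : ℕ) := by
  simp [linearizedPoly, eval_finsetSum]

theorem coeff_linearizedPoly_pow {q : ℕ} (hq : 1 < q) (g : Fin d → R) (l : Fin d) :
    (linearizedPoly q g).coeff (q ^ (l : ℕ)) = g l := by
  have hinj : Function.Injective fun l : Fin d => q ^ (l : ℕ) :=
    (Nat.pow_right_injective hq).comp Fin.val_injective
  rw [linearizedPoly, finsetSum_coeff, Finset.sum_eq_single l]
  · simp
  · intro l' _ hl'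
    simp [coeff_C_mul, coeff_X_pow, hinj.ne hl'.symm]
  · simp

theorem linearizedPoly_eq_zero_iff {q : ℕ} (hq : 1 < q) (g : Fin d → R) :
    linearizedPoly q g = 0 ↔ g = 0 := by
  refine ⟨fun h => funext fun l => ?_, fun h => by simp [linearizedPoly, h]⟩
  rw [Pi.zero_apply, ← coeff_linearizedPoly_pow hq g l, h, coeff_zero]

theorem natDegree_linearizedPoly_lt {q : ℕ} (hq : 1 < q) (g : Fin d → R) :
    (linearizedPoly q g).natDegree < q ^ d := by
  have hpos : 0 < q ^ d := pow_pos (by omega) d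
  refine lt_of_le_of_lt (natDegree_sum_le_of_forall_le _ _ fun l _ => ?_) (Nat.sub_lt hpos one_pos)
  refine (natDegree_C_mul_le _ _).trans ((natDegree_X_pow_le _).trans ?_)
  have := Nat.pow_lt_pow_right hq l.2
  omega

theorem linearizedPoly_eq_zero_of_eval_eq_zero {F L : Type*} [Field F] [Fintype F] [Field L]
    [Algebra F L] (W : Submodule F L) [Module.Finite F W] (hd : d ≤ finrank F W) (g : Fin d → L)
    (hg : ∀ x ∈ W, (linearizedPoly (Fintype.card F) g).eval x = 0) :
    linearizedPoly (Fintype.card F) g = 0 := by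
  have : Finite W := Module.finite_of_finite F
  let : Fintype W := Fintype.ofFinite W
  refine eq_zero_of_natDegree_lt_card_of_eval_eq_zero _ Subtype.val_injective
    (fun x : W => hg x x.2) ?_
  calc _ < Fintype.card F ^ d := natDegree_linearizedPoly_lt Fintype.one_lt_card g
    _ ≤ Fintype.card F ^ finrank F W := Nat.pow_le_pow_right Fintype.card_pos hd
    _ = Fintype.card W := (Module.card_eq_pow_finrank (K := F) (V := W)).symm

end LinearizedPoly

def mooreMatrix {R ι : Type*} [Monoid R] (q d : ℕ) (β : ι → R) : Matrix (Fin d) ι R :=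
  Matrix.of fun l j => β j ^ q ^ (l : ℕ)

section Moore

variable {F L : Type*} [Field F] [Fintype F] [Field L] [Algebra F L] {ι : Type*} [Fintype ι]

theorem mooreMatrix_mulVec_algebraMap (d : ℕ) (β : ι → L) (w : ι → F) :
    mooreMatrix (Fintype.card F) d β *ᵥ (algebraMap F L ∘ w) =
      fun l : Fin d => Fintype.linearCombination F β w ^ Fintype.card F ^ (l : ℕ) := by
  ext l
  rw [← FiniteField.frobeniusAlgHom_pow_apply, Fintype.linearCombination_apply, map_sum]
  simp only [map_smul, FiniteField.frobeniusAlgHom_pow_apply]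
  simp only [Algebra.smul_def, Matrix.mulVec, dotProduct, mooreMatrix, Matrix.of_apply,
    Function.comp_apply]
  simp only [mul_comm]

theorem linearIndependent_row_fromRows_mooreMatrix {m : Type*} [Fintype m] (A : Matrix m ι F)
    (β : ι → L) {d : ℕ} (hA : LinearIndependent L (A.map (algebraMap F L)).row)
    (hβ : Disjoint (ker A.mulVecLin) (ker (Fintype.linearCombination F β)))
    (hd : d ≤ finrank F (ker A.mulVecLin)) :
    LinearIndependent L
      (Matrix.fromRows (A.map (algebraMap F L)) (mooreMatrix (Fintype.card F) d β)).row := by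
  rw [Fintype.linearIndependent_iff]
  intro c hc
  replace hc : c ᵥ* Matrix.fromRows _ _ = 0 := (Matrix.vecMul_eq_sum c _).trans hc
  rw [Matrix.vecMul_fromRows] at hc
  have hmoore : c ∘ Sum.inr = 0 := by
    rw [← linearizedPoly_eq_zero_iff (Fintype.one_lt_card (α := F))]
    refine linearizedPoly_eq_zero_of_eval_eq_zero
      ((ker A.mulVecLin).map (Fintype.linearCombination F β)) (hd.trans_eq ?_) _ ?_
    · rw [← LinearMap.range_domRestrict,
        LinearMap.finrank_range_of_inj (LinearMap.injective_domRestrict_iff.mpr hβ)]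
    · rintro _ ⟨w, hw, rfl⟩
      have hAw : A.map (algebraMap F L) *ᵥ (algebraMap F L ∘ w) = 0 := by
        ext i
        rw [← RingHom.map_mulVec, show A *ᵥ w = 0 from hw]
        simp
      have := congrArg (· ⬝ᵥ (algebraMap F L ∘ w)) hc
      simp only [add_dotProduct, ← Matrix.dotProduct_mulVec, hAw,
        mooreMatrix_mulVec_algebraMap, dotProduct_zero, zero_add, zero_dotProduct] at this
      rw [eval_linearizedPoly]
      exact this
  have hrest : c ∘ Sum.inl = 0 := by
    rw [hmoore, Matrix.zero_vecMul, add_zero] at hc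
    exact Matrix.vecMul_injective_iff.mpr hA (hc.trans (Matrix.zero_vecMul _).symm)
  rintro (i | l)
  · exact congrFun hrest i
  · exact congrFun hmoore l

end Moore

theorem linearized_sandwiched_mrsc_general {F L : Type*} [Field F] [Fintype F] [Field L]
    [Algebra F L] {q n t s k : ℕ} (hq : Fintype.card F = q)
    (hsk : s ≤ k)
    (Ghat : Matrix (Fin s) (Fin n) F) (Bm : Matrix (Fin (t - s)) (Fin n) F)
    (hnec : ∀ S : Finset (Fin n), S.card = k →
      colRank ((Matrix.fromRows Ghat Bm).map (algebraMap F L)) S = k →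
      colRank (Ghat.map (algebraMap F L)) S = s)
    (b : Module.Basis (Fin (t - s)) F L)
    (β : Fin n → L) (hβ : ∀ j, β j = ∑ i, b i * algebraMap F L (Bm i j)) :
    (∀ i, (Ghat.map (algebraMap F L)) i ∈
        rowSpan (Matrix.fromRows (Ghat.map (algebraMap F L))
          (Matrix.of fun (i : Fin (k - s)) (j : Fin n) => β j ^ q ^ (i : ℕ)))) ∧
      ∀ S : Finset (Fin n), S.card = k →
        colRank ((Matrix.fromRows Ghat Bm).map (algebraMap F L)) S = k →
        colRank (Matrix.fromRows (Ghat.map (algebraMap F L))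
          (Matrix.of fun (i : Fin (k - s)) (j : Fin n) => β j ^ q ^ (i : ℕ))) S = k := by
  subst hq
  refine ⟨fun i => Submodule.subset_span ⟨Sum.inl i, rfl⟩, fun S hS hG0 => ?_⟩
  let c : S → Fin n := (↑)
  have hcard : Fintype.card S = k := by simp [hS]
  have hGhat : LinearIndependent L ((Ghat.submatrix id c).map (algebraMap F L)).row :=
    Matrix.linearIndependent_row_of_rank_eq_card_s17
      ((hnec S hS hG0).trans (Fintype.card_fin s).symm)
  rw [colRank, Matrix.submatrix_map, Matrix.fromRows_submatrix_id] at hG0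
  have hβS : β ∘ c = fun j => ∑ i, Bm.submatrix id c i j • b i :=
    funext fun j => by simp [hβ, Algebra.smul_def, mul_comm]
  have hdisj : Disjoint (ker (Ghat.submatrix id c).mulVecLin)
      (ker (Fintype.linearCombination F (β ∘ c))) := by
    rw [hβS, Fintype.ker_linearCombination_sum_smul b.linearIndependent]
    exact Matrix.disjoint_ker_mulVecLin_of_linearIndependent_col _ _
      (Matrix.linearIndependent_col_of_rank_map_eq_card L (hG0.trans hcard.symm))
  have hdim : k - s ≤ finrank F (ker (Ghat.submatrix id c).mulVecLin) := by
    simpa [hcard] using (Ghat.submatrix id c).card_sub_card_le_finrank_ker_mulVecLin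
  have hindep := linearIndependent_row_fromRows_mooreMatrix _ _ hGhat hdisj hdim
  rw [colRank, ← mooreMatrix, Matrix.fromRows_submatrix_id]
  exact hindep.rank_matrix.trans (by simp [hsk])

/-- explicit linearized-polynomial construction of sandwiched MRSCs.
`G0 = [Ĝ; B]`, `β = α·B` over `F_Q`, `Q = q^{t-s}`; stacking `Ĝ` on the Moore matrix
of `β` gives an `[n,k]` MRSC of `C₀^{(Q)}` containing `Ĉ^{(Q)}`. -/
theorem linearized_sandwiched_mrsc {F L : Type*} [Field F] [Fintype F] [Field L]
    [Algebra F L] {q n t s k : ℕ} (hq : Fintype.card F = q)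
    (hts : Module.finrank F L = t - s) (hsk : s ≤ k) (hkt : k ≤ t)
    (Ghat : Matrix (Fin s) (Fin n) F) (Bm : Matrix (Fin (t - s)) (Fin n) F)
    (hnec : ∀ S : Finset (Fin n), S.card = k →
      colRank ((Matrix.fromRows Ghat Bm).map (algebraMap F L)) S = k →
      colRank (Ghat.map (algebraMap F L)) S = s)
    (b : Module.Basis (Fin (t - s)) F L)
    (β : Fin n → L) (hβ : ∀ j, β j = ∑ i, b i * algebraMap F L (Bm i j)) :
    (∀ i, (Ghat.map (algebraMap F L)) i ∈
        rowSpan (Matrix.fromRows (Ghat.map (algebraMap F L))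
          (Matrix.of fun (i : Fin (k - s)) (j : Fin n) => β j ^ q ^ (i : ℕ)))) ∧
      ∀ S : Finset (Fin n), S.card = k →
        colRank ((Matrix.fromRows Ghat Bm).map (algebraMap F L)) S = k →
        colRank (Matrix.fromRows (Ghat.map (algebraMap F L))
          (Matrix.of fun (i : Fin (k - s)) (j : Fin n) => β j ^ q ^ (i : ℕ))) S = k :=
  linearized_sandwiched_mrsc_general hq hsk Ghat Bm hnec b β hβ
end
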